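/- For all complex x, y with |x| < 1/(1−q) and |y| < 1/(1−q), the series ∑_{n=0}^∞ (x ⊕_q y)^{2n}/[2n]_q! converges absolutely and equals cosh_q(x) cosh_q(y) + sinh_q(x) sinh_q(y). -/

import Mathlib

/-!
Dividing by `[n]_q!` turns the Ward power `(x ⊕_q y)^n` into the `n`-th Cauchy product coefficient
of the sequences `x^n/[n]_q!` and `y^n/[n]_q!`, which are absolutely summable by the ratio test
since `[n]_q → 1/(1-q)`. An even-index coefficient splits into an even–even and an odd–odd
Cauchy product coefficient, and these sum to `cosh_q x cosh_q y` and `sinh_q x sinh_q y`.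
-/

open Finset

/-- The q-number `[n]_q = (1 - q^n)/(1 - q)`. -/
noncomputable def qNum (q : ℝ) (n : ℕ) : ℝ := (1 - q ^ n) / (1 - q)

/-- The q-factorial `[n]_q! = ∏_{k=1}^n [k]_q`. -/
noncomputable def qFact (q : ℝ) (n : ℕ) : ℝ := ∏ k ∈ Finset.range n, qNum q (k + 1)

/-- The q-binomial coefficient `[n choose k]_q`. -/
noncomputable def qBinom (q : ℝ) (n k : ℕ) : ℝ := qFact q n / (qFact q k * qFact q (n - k))

/-- The Ward q-addition power `(x ⊕_q y)^n = ∑_{k=0}^n [n choose k]_q x^k y^(n-k)`. -/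
noncomputable def wardPow (q : ℝ) (x y : ℂ) (n : ℕ) : ℂ :=
  ∑ k ∈ Finset.range (n + 1), (qBinom q n k : ℂ) * x ^ k * y ^ (n - k)

/-- The q-hyperbolic cosine `cosh_q(z) = ∑ z^(2n)/[2n]_q!`. -/
noncomputable def qCosh (q : ℝ) (z : ℂ) : ℂ := ∑' n : ℕ, z ^ (2 * n) / (qFact q (2 * n) : ℂ)

/-- The q-hyperbolic sine `sinh_q(z) = ∑ z^(2n+1)/[2n+1]_q!`. -/
noncomputable def qSinh (q : ℝ) (z : ℂ) : ℂ :=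
  ∑' n : ℕ, z ^ (2 * n + 1) / (qFact q (2 * n + 1) : ℂ)

open Filter Topology

theorem Finset.sum_range_two_mul_add_one {M : Type*} [AddCommMonoid M] (a : ℕ → M) (n : ℕ) :
    ∑ k ∈ range (2 * n + 1), a k = ∑ k ∈ range (n + 1), a (2 * k) + ∑ k ∈ range n, a (2 * k + 1) := by
  induction n with
  | zero => simp
  | succ n ih =>
    rw [show 2 * (n + 1) + 1 = 2 * n + 1 + 1 + 1 by ring, sum_range_succ, sum_range_succ, ih,
      sum_range_succ (fun k => a (2 * k)) (n + 1), sum_range_succ (fun k => a (2 * k + 1)) n,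
      show 2 * (n + 1) = 2 * n + 1 + 1 by ring]
    abel

theorem sum_range_mul_two_mul_sub_eq {R : Type*} [NonUnitalNonAssocSemiring R] (f g : ℕ → R)
    (n : ℕ) :
    ∑ k ∈ range (2 * n + 1), f k * g (2 * n - k) =
      ∑ k ∈ range (n + 1), f (2 * k) * g (2 * (n - k)) +
        ∑ k ∈ range n, f (2 * k + 1) * g (2 * (n - 1 - k) + 1) := by
  rw [sum_range_two_mul_add_one]
  congr 1 <;> refine sum_congr rfl fun k hk => ?_ <;> have := mem_range.mp hk <;> congr 2 <;> omega

theorem tsum_sum_range_mul_two_mul_sub {R : Type*} [NormedRing R] [CompleteSpace R] {f g : ℕ → R}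
    (hf : Summable (‖f ·‖)) (hg : Summable (‖g ·‖)) :
    ∑' n, ∑ k ∈ range (2 * n + 1), f k * g (2 * n - k) =
      (∑' n, f (2 * n)) * (∑' n, g (2 * n)) + (∑' n, f (2 * n + 1)) * ∑' n, g (2 * n + 1) := by
  have hev : Function.Injective (2 * · : ℕ → ℕ) := mul_right_injective₀ two_ne_zero
  have hodd : Function.Injective (2 * · + 1 : ℕ → ℕ) := fun a b h => by simpa using h
  have hfe := hf.comp_injective hev
  have hge := hg.comp_injective hev
  have hfo := hf.comp_injective hodd
  have hgo := hg.comp_injective hodd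
  rw [tsum_mul_tsum_eq_tsum_sum_range_of_summable_norm hfe hge,
    tsum_mul_tsum_eq_tsum_sum_range_of_summable_norm hfo hgo]
  simp_rw [sum_range_mul_two_mul_sub_eq f g]
  -- the odd–odd part is the Cauchy product of the odd parts, shifted by one index
  have hodd_prod := (summable_norm_sum_mul_range_of_summable_norm hfo hgo).of_norm
  rw [Summable.tsum_add (summable_norm_sum_mul_range_of_summable_norm hfe hge).of_norm,
    tsum_eq_zero_add' (f := fun n => ∑ k ∈ range n, f (2 * k + 1) * g (2 * (n - 1 - k) + 1))]
  · simp
  · simpa using hodd_prod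
  · exact (summable_nat_add_iff 1).mp (by simpa using hodd_prod)

section QAnalogues

variable {q : ℝ}

theorem qNum_succ_pos (hq : |q| < 1) (n : ℕ) : 0 < qNum q (n + 1) := by
  have hpow : q ^ (n + 1) < 1 := (le_abs_self _).trans_lt <| by
    rw [abs_pow]; exact pow_lt_one₀ (abs_nonneg q) hq n.succ_ne_zero
  exact div_pos (by linarith) (by linarith [le_abs_self q])

theorem qFact_pos (hq : |q| < 1) (n : ℕ) : 0 < qFact q n :=
  prod_pos fun k _ => qNum_succ_pos hq k

theorem qFact_succ (q : ℝ) (n : ℕ) : qFact q (n + 1) = qFact q n * qNum q (n + 1) :=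
  prod_range_succ _ _

theorem tendsto_qNum (hq : |q| < 1) : Tendsto (qNum q) atTop (𝓝 (1 / (1 - q))) := by
  have h := (tendsto_pow_atTop_nhds_zero_of_abs_lt_one hq).const_sub 1 |>.div_const (1 - q)
  rwa [sub_zero] at h

theorem norm_pow_succ_div_qFact (hq : |q| < 1) (x : ℂ) (n : ℕ) :
    ‖x ^ (n + 1) / (qFact q (n + 1) : ℂ)‖ = ‖x‖ / qNum q (n + 1) * ‖x ^ n / (qFact q n : ℂ)‖ := by
  have hF := qFact_pos hq n
  have hN := qNum_succ_pos hq n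
  rw [qFact_succ, pow_succ, Complex.ofReal_mul, mul_div_mul_comm, norm_mul, mul_comm]
  simp only [norm_div, Complex.norm_real, Real.norm_of_nonneg hN.le]

theorem summable_norm_pow_div_qFact (hq : |q| < 1) {x : ℂ} (hx : ‖x‖ < 1 / (1 - q)) :
    Summable fun n => ‖x ^ n / (qFact q n : ℂ)‖ := by
  have hq1 : 0 < 1 - q := by linarith [le_abs_self q]
  have hratio : Tendsto (fun n => ‖x‖ / qNum q (n + 1)) atTop (𝓝 (‖x‖ / (1 / (1 - q)))) :=
    tendsto_const_nhds.div ((tendsto_qNum hq).comp (tendsto_add_atTop_nat 1)) (by positivity)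
  obtain ⟨r, hxr, hr1⟩ := exists_between ((div_lt_one (by positivity)).mpr hx)
  refine summable_of_ratio_norm_eventually_le hr1 ?_
  filter_upwards [hratio.eventually_le_const hxr] with n hn
  rw [norm_norm, norm_norm, norm_pow_succ_div_qFact hq]
  exact mul_le_mul_of_nonneg_right hn (norm_nonneg _)

theorem wardPow_div_qFact (hq : |q| < 1) (x y : ℂ) (n : ℕ) :
    wardPow q x y n / (qFact q n : ℂ) =
      ∑ k ∈ range (n + 1), x ^ k / (qFact q k : ℂ) * (y ^ (n - k) / (qFact q (n - k) : ℂ)) := by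
  have hF (m : ℕ) : (qFact q m : ℂ) ≠ 0 := Complex.ofReal_ne_zero.mpr (qFact_pos hq m).ne'
  rw [wardPow, sum_div]
  refine sum_congr rfl fun k _ => ?_
  rw [qBinom, Complex.ofReal_div, Complex.ofReal_mul]
  field_simp [hF]

end QAnalogues

theorem stmt_3 (q : ℝ) (hq0 : 0 < q) (hq1 : q < 1) (x y : ℂ)
    (hx : ‖x‖ < 1 / (1 - q)) (hy : ‖y‖ < 1 / (1 - q)) :
    Summable (fun n : ℕ => ‖wardPow q x y (2 * n) / (qFact q (2 * n) : ℂ)‖) ∧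
      ∑' n : ℕ, wardPow q x y (2 * n) / (qFact q (2 * n) : ℂ) =
        qCosh q x * qCosh q y + qSinh q x * qSinh q y := by
  have hq : |q| < 1 := abs_lt.mpr ⟨by linarith, hq1⟩
  have hx' := summable_norm_pow_div_qFact hq hx
  have hy' := summable_norm_pow_div_qFact hq hy
  simp_rw [wardPow_div_qFact hq]
  exact ⟨(summable_norm_sum_mul_range_of_summable_norm hx' hy').comp_injective
    (mul_right_injective₀ two_ne_zero), tsum_sum_range_mul_two_mul_sub hx' hy'⟩
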